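/- arXiv:1407.2674 — 5 statements merged into one kernel-verified Lean document; each statement's English description precedes it below -/
import Mathlib

section
/- For a concept class C over domain X, VC(C) ≤ VC(C^label) ≤ 2·VC(C), where C^label = {c^label : c ∈ C} is the class over X × {0,1} defined by c^label(x, y) = 1 iff c(x) ≠ y. -/
/-
Labelling is reversible: `c^label (x, false) = c x`, so the copy `B × {false}` of a set shattered by
`C` is shattered by `C^label`; conversely, if `C^label` shatters `B`, then `C` shatters its
projection to `X`, and `B` has at most two points over each point of that projection.
-/

/-- A concept class `C` shatters a finite set `B` if every dichotomy of `B` is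
realized by some concept in `C`. -/
def Shatters {X : Type*} (C : Set (X → Bool)) (B : Finset X) : Prop :=
  ∀ g : X → Bool, ∃ c ∈ C, ∀ x ∈ B, c x = g x

/-- The VC dimension of a concept class: the supremum of cardinalities of shattered sets. -/
noncomputable def vcDim {X : Type*} (C : Set (X → Bool)) : ℕ∞ :=
  ⨆ B ∈ {B : Finset X | Shatters C B}, (B.card : ℕ∞)

section

variable {X Y : Type*}

lemma card_le_vcDim {C : Set (X → Bool)} {B : Finset X} (h : Shatters C B) :
    (B.card : ℕ∞) ≤ vcDim C :=
  le_iSup₂ (f := fun (B : Finset X) (_ : B ∈ {B : Finset X | Shatters C B}) => (B.card : ℕ∞)) B h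

lemma Shatters.image [DecidableEq Y] {C : Set (X → Bool)} {D : Set (Y → Bool)} {φ : X → Y}
    (hCD : ∀ c ∈ C, ∃ d ∈ D, d ∘ φ = c) {B : Finset X} (hB : Shatters C B) :
    Shatters D (B.image φ) := by
  intro g
  obtain ⟨c, hc, hcg⟩ := hB (g ∘ φ)
  obtain ⟨d, hd, rfl⟩ := hCD c hc
  refine ⟨d, hd, ?_⟩
  simp only [Finset.mem_image, forall_exists_index, and_imp, forall_apply_eq_imp_iff₂]
  exact hcg

lemma vcDim_le_of_injective {C : Set (X → Bool)} {D : Set (Y → Bool)} {φ : X → Y}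
    (hφ : φ.Injective) (hCD : ∀ c ∈ C, ∃ d ∈ D, d ∘ φ = c) : vcDim C ≤ vcDim D := by
  classical
  refine iSup₂_le fun B hB => ?_
  rw [← Finset.card_image_of_injective B hφ]
  exact card_le_vcDim (hB.image hCD)

lemma Finset.card_le_card_mul_card_image_fst {Z : Type*} [DecidableEq X] [Fintype Z]
    (B : Finset (X × Z)) : B.card ≤ Fintype.card Z * (B.image Prod.fst).card := by
  have hsub : B ⊆ B.image Prod.fst ×ˢ Finset.univ := fun p hp =>
    Finset.mem_product.2 ⟨Finset.mem_image_of_mem _ hp, Finset.mem_univ _⟩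
  simpa [mul_comm] using Finset.card_le_card hsub

def labelClass (C : Set (X → Bool)) : Set (X × Bool → Bool) :=
  {f | ∃ c ∈ C, f = fun p => xor p.2 (c p.1)}

lemma vcDim_le_vcDim_labelClass (C : Set (X → Bool)) : vcDim C ≤ vcDim (labelClass C) :=
  vcDim_le_of_injective (φ := fun x => (x, false)) (fun _ _ h => congrArg Prod.fst h)
    fun c hc => ⟨_, ⟨c, hc, rfl⟩, by ext; simp⟩

lemma Shatters.image_fst_of_labelClass [DecidableEq X] {C : Set (X → Bool)}
    {B : Finset (X × Bool)} (hB : Shatters (labelClass C) B) : Shatters C (B.image Prod.fst) := by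
  intro g
  obtain ⟨f, ⟨c, hc, rfl⟩, hcg⟩ := hB fun p => xor p.2 (g p.1)
  refine ⟨c, hc, ?_⟩
  simp only [Finset.mem_image, forall_exists_index, and_imp]
  rintro _ p hp rfl
  exact Bool.xor_right_inj.mp (hcg p hp)

lemma vcDim_labelClass_le (C : Set (X → Bool)) : vcDim (labelClass C) ≤ 2 * vcDim C := by
  classical
  refine iSup₂_le fun B hB => ?_
  calc (B.card : ℕ∞) ≤ 2 * (B.image Prod.fst).card := by
        exact_mod_cast B.card_le_card_mul_card_image_fst
    _ ≤ 2 * vcDim C := by gcongr; exact card_le_vcDim hB.image_fst_of_labelClass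

end

theorem stmt_2 {X : Type*} (C : Set (X → Bool)) :
    vcDim C ≤ vcDim {f : X × Bool → Bool | ∃ c ∈ C, f = fun p => xor p.2 (c p.1)} ∧
    vcDim {f : X × Bool → Bool | ∃ c ∈ C, f = fun p => xor p.2 (c p.1)} ≤ 2 * vcDim C :=
  ⟨vcDim_le_vcDim_labelClass C, vcDim_labelClass_le C⟩
end

section
/- With L(S,·) as above, let q(S,j) = min( L(S,j) − (1−α)r , r − L(S,j+1) ) for 0 ≤ j ≤ log(T'). Then q(S,·) is quasi-concave: for every i ≤ ℓ ≤ j, q(S,ℓ) ≥ min{q(S,i), q(S,j)}. (This holds regardless of whether Q(S,·) itself is quasi-concave.) -/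
/-! Shrinking a window to its prefix can only raise its minimum, so `L` is antitone in `j`, also
across the extension at `t + 1`, which lies below `L t`. Hence `q` is the pointwise minimum of the
antitone `j ↦ L j - (1 - α) r` and the monotone `j ↦ r - L (j + 1)`, and such a minimum is
quasi-concave. -/

/-- `Lfun T' Q j` is the maximum, over intervals `[a, a + 2^j - 1] ⊆ [0, T']`,
of the minimum of `Q` over the interval. -/
noncomputable def Lfun (T' : ℕ) (Q : ℕ → ℝ) (j : ℕ) : ℝ :=
  ⨆ a : {a : ℕ // a + 2 ^ j ≤ T' + 1}, ⨅ i : Finset.Icc (a : ℕ) ((a : ℕ) + 2 ^ j - 1), Q i.1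

/-- `L` extended to `j = log(T') + 1` by `min 0 (L (log T'))`, where `T' = 2 ^ t`. -/
noncomputable def Lext (t : ℕ) (Q : ℕ → ℝ) (j : ℕ) : ℝ :=
  if j ≤ t then Lfun (2 ^ t) Q j else min 0 (Lfun (2 ^ t) Q t)

/-- The quality function `q(S,j) = min (L(S,j) - (1-α)r, r - L(S,j+1))`. -/
noncomputable def qfun (t : ℕ) (Q : ℕ → ℝ) (α r : ℝ) (j : ℕ) : ℝ :=
  min (Lext t Q j - (1 - α) * r) (r - Lext t Q (j + 1))

theorem min_le_of_antitoneOn_of_monotoneOn {α β : Type*} [Preorder α] [LinearOrder β]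
    {f g : α → β} {s : Set α} (hf : AntitoneOn f s) (hg : MonotoneOn g s) {i ℓ j : α}
    (hi : i ∈ s) (hℓ : ℓ ∈ s) (hj : j ∈ s) (hiℓ : i ≤ ℓ) (hℓj : ℓ ≤ j) :
    min (min (f i) (g i)) (min (f j) (g j)) ≤ min (f ℓ) (g ℓ) :=
  le_min ((min_le_right _ _).trans ((min_le_left _ _).trans (hf hℓ hj hℓj)))
    ((min_le_left _ _).trans ((min_le_right _ _).trans (hg hi hℓ hiℓ)))

instance finite_subtype_add_le (k n : ℕ) : Finite {a : ℕ // a + k ≤ n} :=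
  ((Set.finite_Iic n).subset fun a (ha : a + k ≤ n) => show a ≤ n by omega).to_subtype

theorem ciInf_finset_le_ciInf_finset {ι β : Type*} [ConditionallyCompleteLattice β]
    {s t : Finset ι} (hs : s.Nonempty) (hst : s ⊆ t) (f : ι → β) :
    ⨅ i : t, f i ≤ ⨅ i : s, f i :=
  have : Nonempty s := hs.to_subtype
  le_ciInf fun i => ciInf_le (f := fun i : t => f i) (Set.finite_range _).bddBelow ⟨i, hst i.2⟩

theorem Lfun_le_Lfun_of_le (T' : ℕ) (Q : ℕ → ℝ) {j j' : ℕ} (h : j ≤ j') (h' : 2 ^ j' ≤ T' + 1) :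
    Lfun T' Q j' ≤ Lfun T' Q j := by
  have : Nonempty {a : ℕ // a + 2 ^ j' ≤ T' + 1} := ⟨⟨0, by omega⟩⟩
  have hpow : 2 ^ j ≤ 2 ^ j' := Nat.pow_le_pow_right two_pos h
  have hpos : 0 < 2 ^ j := Nat.two_pow_pos j
  refine ciSup_le fun a => ?_
  have ha : (a : ℕ) + 2 ^ j ≤ T' + 1 := by have := a.2; omega
  calc ⨅ i : Finset.Icc (a : ℕ) (a + 2 ^ j' - 1), Q i
      ≤ ⨅ i : Finset.Icc (a : ℕ) (a + 2 ^ j - 1), Q i :=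
        ciInf_finset_le_ciInf_finset (Finset.nonempty_Icc.2 (by omega))
          (Finset.Icc_subset_Icc le_rfl (by omega)) Q
    _ ≤ Lfun T' Q j :=
        le_ciSup (f := fun b : {b : ℕ // b + 2 ^ j ≤ T' + 1} =>
          ⨅ i : Finset.Icc (b : ℕ) (b + 2 ^ j - 1), Q i) (Set.finite_range _).bddAbove ⟨a, ha⟩

theorem Lext_antitoneOn (t : ℕ) (Q : ℕ → ℝ) : AntitoneOn (Lext t Q) (Set.Iic (t + 1)) := by
  intro j hj j' hj' h
  unfold Lext
  split_ifs with hj't hjt hjt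
  · exact Lfun_le_Lfun_of_le _ Q h ((Nat.pow_le_pow_right two_pos hj't).trans (by omega))
  · omega
  · exact (min_le_right _ _).trans (Lfun_le_Lfun_of_le _ Q hjt (by omega))
  · exact le_rfl

theorem stmt_4_general (t : ℕ) (Q : ℕ → ℝ) (α r : ℝ)
    (i ℓ j : ℕ) (hiℓ : i ≤ ℓ) (hℓj : ℓ ≤ j) (hj : j ≤ t) :
    min (qfun t Q α r i) (qfun t Q α r j) ≤ qfun t Q α r ℓ := by
  have hL := Lext_antitoneOn t Q
  have hf : AntitoneOn (fun k => Lext t Q k - (1 - α) * r) (Set.Iic t) := fun a ha b hb hab =>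
    sub_le_sub_right (hL (Nat.le_succ_of_le ha) (Nat.le_succ_of_le hb) hab) _
  have hg : MonotoneOn (fun k => r - Lext t Q (k + 1)) (Set.Iic t) := fun a ha b hb hab =>
    sub_le_sub_left (hL (Nat.succ_le_succ ha) (Nat.succ_le_succ hb) (Nat.succ_le_succ hab)) _
  exact min_le_of_antitoneOn_of_monotoneOn hf hg (s := Set.Iic t)
    (hiℓ.trans (hℓj.trans hj)) (hℓj.trans hj) hj hiℓ hℓj

theorem stmt_4 (t : ℕ) (Q : ℕ → ℝ) (α r : ℝ) (hα : 0 < α) (hα1 : α < 1)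
    (i ℓ j : ℕ) (hiℓ : i ≤ ℓ) (hℓj : ℓ ≤ j) (hj : j ≤ t) :
    min (qfun t Q α r i) (qfun t Q α r j) ≤ qfun t Q α r ℓ :=
  stmt_4_general t Q α r i ℓ j hiℓ hℓj hj
end

section
/- Let S be a sample labeled by a threshold concept c_j (c_j(x) = 1 iff x < j), and define Q(S,k) = the number of sample points correctly classified by the threshold concept c_k. Then Q(S,·) is quasi-concave: for all u ≤ v ≤ w, Q(S,v) ≥ min{Q(S,u), Q(S,w)}. -/
open Finset

theorem min_le_of_monotoneOn_Iic_of_antitoneOn_Ici {α β : Type*} [LinearOrder α] [LinearOrder β]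
    {f : α → β} {j : α} (hmono : MonotoneOn f (Set.Iic j)) (hanti : AntitoneOn f (Set.Ici j))
    {u v w : α} (huv : u ≤ v) (hvw : v ≤ w) :
    min (f u) (f w) ≤ f v := by
  rcases le_total v j with hvj | hjv
  · exact (min_le_left _ _).trans (hmono (huv.trans hvj) hvj huv)
  · exact (min_le_right _ _).trans (hanti hjv (hjv.trans hvw) hvw)

section Threshold

variable {ι α : Type*} [Fintype ι] [LinearOrder α]

/-- `Q(S, k)` for the sample `x` labelled by `c_j`. -/
def thresholdAgreement (x : ι → α) (j k : α) : ℕ :=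
  #{i | (x i < k ↔ x i < j)}

theorem thresholdAgreement_monotoneOn (x : ι → α) (j : α) :
    MonotoneOn (thresholdAgreement x j) (Set.Iic j) := by
  intro a _ b (hbj : b ≤ j) hab
  refine card_le_card fun i => ?_
  simp only [mem_filter, mem_univ, true_and]
  exact fun hi => ⟨fun h => h.trans_le hbj, fun h => (hi.mpr h).trans_le hab⟩

theorem thresholdAgreement_antitoneOn (x : ι → α) (j : α) :
    AntitoneOn (thresholdAgreement x j) (Set.Ici j) := by
  intro a (hja : j ≤ a) b _ hab
  refine card_le_card fun i => ?_
  simp only [mem_filter, mem_univ, true_and]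
  exact fun hi => ⟨fun h => hi.mp (h.trans_le hab), fun h => h.trans_le hja⟩

end Threshold

theorem stmt_6_general (m : ℕ) (j : ℕ) (x : Fin m → ℕ) (y : Fin m → Bool)
    (hy : ∀ i, y i = decide (x i < j))
    (Q : ℕ → ℕ)
    (hQ : ∀ k, Q k = (Finset.univ.filter fun i => decide (x i < k) = y i).card)
    (u v w : ℕ) (huv : u ≤ v) (hvw : v ≤ w) :
    min (Q u) (Q w) ≤ Q v := by
  have hQ_eq : Q = thresholdAgreement x j := by
    ext k
    simp only [hQ, hy, decide_eq_decide, thresholdAgreement]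
  rw [hQ_eq]
  exact min_le_of_monotoneOn_Iic_of_antitoneOn_Ici (thresholdAgreement_monotoneOn x j)
    (thresholdAgreement_antitoneOn x j) huv hvw

theorem stmt_6 (d m : ℕ) (j : ℕ) (hj : j ≤ 2 ^ d) (x : Fin m → ℕ) (y : Fin m → Bool)
    (hx : ∀ i, x i < 2 ^ d) (hy : ∀ i, y i = decide (x i < j))
    (Q : ℕ → ℕ)
    (hQ : ∀ k, Q k = (Finset.univ.filter fun i => decide (x i < k) = y i).card)
    (u v w : ℕ) (huv : u ≤ v) (hvw : v ≤ w) (hw : w ≤ 2 ^ d) :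
    min (Q u) (Q w) ≤ Q v :=
  stmt_6_general m j x y hy Q hQ u v w huv hvw
end

section
/- Greedy packing bound for k-point concepts: if 2^d ≥ k^{1.1} (and k ≥ 1), there exists a family B of k-element subsets of a domain of size 2^d, none containing a fixed distinguished element, such that any two distinct members of B intersect in at most k/2 elements, and |B| ≥ ((2^d − 1)/(4e²k))^{k/2}. -/
/-!
Let `N = 2^d - 1` and `m = ⌊k/2⌋ + 1`. A maximal family `B` of `k`-subsets of `X \ {x₀}` with
pairwise intersections of size at most `k/2` dominates: every `k`-subset meets some member of `B`
in at least `m` points. A fixed `k`-set is met in at least `m` points by at most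
`C(k,m) C(N,k-m) ≤ 4^m C(N,k-m)` of the `k`-sets, and `C(N,k-m) (N-k+1)^m ≤ C(N,k) k^m`,
so `|B| ≥ ((N-k+1)/(4k))^m`. This beats `(N/(4e²k))^{k/2}` whenever the latter exceeds `1`;
otherwise `|B| ≥ 1` is enough.
-/

open Finset Real

namespace Finset

variable {α : Type*}

theorem exists_pairwise_subset_forall_exists_not {r : α → α → Prop} (hr : ∀ a b, r a b → r b a)
    (s : Finset α) (hs : ∀ a ∈ s, ¬ r a a) :
    ∃ t ⊆ s, (t : Set α).Pairwise r ∧ ∀ a ∈ s, ∃ b ∈ t, ¬ r a b := by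
  classical
  obtain ⟨t, ht⟩ :=
    (s.powerset.filter fun t : Finset α => (t : Set α).Pairwise r).exists_maximal ⟨∅, by simp⟩
  obtain ⟨hts, htr⟩ := mem_filter.1 ht.prop
  refine ⟨t, mem_powerset.1 hts, htr, fun a ha => ?_⟩
  by_contra! hrel
  have hat : a ∉ t := fun hat => hs a ha (hrel a hat)
  have hins : insert a t ∈ s.powerset.filter fun t : Finset α => (t : Set α).Pairwise r := by
    refine mem_filter.2 ⟨mem_powerset.2 (insert_subset ha (mem_powerset.1 hts)), ?_⟩
    rw [coe_insert]
    exact htr.insert fun b hb _ => ⟨hrel b hb, hr a b (hrel b hb)⟩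
  exact hat (ht.2 hins (subset_insert a t) (mem_insert_self a t))

variable [DecidableEq α]

theorem card_filter_le_card_inter_le (U A₀ : Finset α) (k m : ℕ) :
    #{A ∈ U.powersetCard k | m ≤ #(A ∩ A₀)} ≤ (#A₀).choose m * (#U).choose (k - m) := by
  have hsub : {A ∈ U.powersetCard k | m ≤ #(A ∩ A₀)} ⊆
      (A₀.powersetCard m ×ˢ U.powersetCard (k - m)).image fun p => p.1 ∪ p.2 := by
    intro A hA
    obtain ⟨hAU, hAk⟩ := mem_powersetCard.1 (mem_filter.1 hA).1
    obtain ⟨S, hS, hSm⟩ := exists_subset_card_eq (mem_filter.1 hA).2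
    have hSA : S ⊆ A := hS.trans inter_subset_left
    refine mem_image.2 ⟨(S, A \ S), mem_product.2 ⟨?_, ?_⟩, union_sdiff_of_subset hSA⟩
    · exact mem_powersetCard.2 ⟨hS.trans inter_subset_right, hSm⟩
    · exact mem_powersetCard.2 ⟨sdiff_subset.trans hAU, by rw [card_sdiff_of_subset hSA, hAk, hSm]⟩
  calc _ ≤ _ := card_le_card hsub
    _ ≤ _ := card_image_le
    _ = _ := by rw [card_product, card_powersetCard, card_powersetCard]

end Finset

namespace Nat

theorem choose_sub_mul_pow_le_choose_mul_pow {N k : ℕ} (hkN : k ≤ N) {m : ℕ} (hmk : m ≤ k) :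
    N.choose (k - m) * (N - k + 1) ^ m ≤ N.choose k * k ^ m := by
  induction m with
  | zero => simp
  | succ m ih =>
    set j := k - (m + 1)
    have hj : j + 1 = k - m := by omega
    have hstep : N.choose j * (N - k + 1) ≤ N.choose (j + 1) * k :=
      calc N.choose j * (N - k + 1) ≤ N.choose j * (N - j) := Nat.mul_le_mul_left _ (by omega)
        _ = N.choose (j + 1) * (j + 1) := (choose_succ_right_eq N j).symm
        _ ≤ N.choose (j + 1) * k := Nat.mul_le_mul_left _ (by omega)
    calc N.choose j * (N - k + 1) ^ (m + 1)
        = N.choose j * (N - k + 1) * (N - k + 1) ^ m := by ring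
      _ ≤ N.choose (j + 1) * k * (N - k + 1) ^ m := Nat.mul_le_mul_right _ hstep
      _ = k * (N.choose (k - m) * (N - k + 1) ^ m) := by rw [hj]; ring
      _ ≤ k * (N.choose k * k ^ m) := Nat.mul_le_mul_left _ (ih (by omega))
      _ = N.choose k * k ^ (m + 1) := by ring

theorem choose_le_four_pow {k m : ℕ} (h : k ≤ 2 * m) : k.choose m ≤ 4 ^ m :=
  calc k.choose m ≤ 2 ^ k := choose_le_two_pow k m
    _ ≤ 2 ^ (2 * m) := Nat.pow_le_pow_right (by norm_num) h
    _ = 4 ^ m := by rw [pow_mul]; norm_num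

end Nat

theorem exists_packing_powersetCard {α : Type*} [DecidableEq α] (U : Finset α) {k : ℕ} (hk : 1 ≤ k) (hkU : k ≤ #U) :
    ∃ B ⊆ U.powersetCard k, (B : Set (Finset α)).Pairwise (fun A₁ A₂ => 2 * #(A₁ ∩ A₂) ≤ k) ∧
      B.Nonempty ∧ (#U - k + 1) ^ (k / 2 + 1) ≤ #B * (4 * k) ^ (k / 2 + 1) := by
  set m := k / 2 + 1
  set N := #U
  obtain ⟨B, hBU, hB, hcover⟩ := (U.powersetCard k).exists_pairwise_subset_forall_exists_not
    (r := fun A₁ A₂ => 2 * #(A₁ ∩ A₂) ≤ k) (fun A₁ A₂ h => by rwa [inter_comm] at h)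
    (fun A hA => by rw [inter_self, (mem_powersetCard.1 hA).2]; omega)
  obtain ⟨A, hA⟩ := powersetCard_nonempty.2 hkU
  refine ⟨B, hBU, hB, ?_, ?_⟩
  · obtain ⟨A₀, hA₀, -⟩ := hcover A hA
    exact ⟨A₀, hA₀⟩
  have hcount : N.choose k ≤ #B * (k.choose m * N.choose (k - m)) :=
    calc N.choose k = #(U.powersetCard k) := (card_powersetCard k U).symm
      _ ≤ #(B.biUnion fun A₀ => {A ∈ U.powersetCard k | m ≤ #(A ∩ A₀)}) := by
          refine card_le_card fun A hA => mem_biUnion.2 ?_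
          obtain ⟨A₀, hA₀, hlt⟩ := hcover A hA
          exact ⟨A₀, hA₀, mem_filter.2 ⟨hA, by omega⟩⟩
      _ ≤ ∑ A₀ ∈ B, #{A ∈ U.powersetCard k | m ≤ #(A ∩ A₀)} := card_biUnion_le
      _ ≤ ∑ _A₀ ∈ B, k.choose m * N.choose (k - m) := by
          refine sum_le_sum fun A₀ hA₀ => ?_
          have := card_filter_le_card_inter_le U A₀ k m
          rwa [(mem_powersetCard.1 (hBU hA₀)).2] at this
      _ = #B * (k.choose m * N.choose (k - m)) := by rw [sum_const, smul_eq_mul]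
  refine Nat.le_of_mul_le_mul_left ?_ (Nat.choose_pos (n := N) (k := k - m) (by omega))
  calc N.choose (k - m) * (N - k + 1) ^ m ≤ N.choose k * k ^ m :=
        Nat.choose_sub_mul_pow_le_choose_mul_pow hkU (by omega)
    _ ≤ #B * (k.choose m * N.choose (k - m)) * k ^ m := Nat.mul_le_mul_right _ hcount
    _ ≤ #B * (4 ^ m * N.choose (k - m)) * k ^ m := by
        gcongr
        exact Nat.choose_le_four_pow (by omega)
    _ = N.choose (k - m) * (#B * (4 * k) ^ m) := by rw [mul_pow]; ring

theorem lt_two_pow_of_rpow_le {k d : ℕ} (hk : 1 ≤ k) (hd : d ≠ 0)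
    (hkd : (k : ℝ) ^ (1.1 : ℝ) ≤ 2 ^ d) : k < 2 ^ d := by
  rcases hk.eq_or_lt with rfl | hk
  · exact Nat.one_lt_two_pow hd
  have : (k : ℝ) < 2 ^ d := calc
    (k : ℝ) = k ^ (1 : ℝ) := (rpow_one _).symm
    _ < k ^ (1.1 : ℝ) := rpow_lt_rpow_of_exponent_lt (by exact_mod_cast hk) (by norm_num)
    _ ≤ 2 ^ d := hkd
  exact_mod_cast this

theorem rpow_half_le_of_pow_le {N k b : ℕ} (hk : 1 ≤ k) (hb : 1 ≤ b)
    (h : (N - k + 1) ^ (k / 2 + 1) ≤ b * (4 * k) ^ (k / 2 + 1)) :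
    ((N : ℝ) / (4 * exp 1 ^ 2 * k)) ^ ((k : ℝ) / 2) ≤ b := by
  set m := k / 2 + 1
  set t := (N : ℝ) / (4 * exp 1 ^ 2 * k)
  have hk₀ : (0 : ℝ) < k := by exact_mod_cast hk
  have he : (4 : ℝ) ≤ exp 1 ^ 2 := by nlinarith [add_one_le_exp (1 : ℝ)]
  have ht₀ : 0 ≤ t := by positivity
  rcases le_or_gt t 1 with ht | ht
  · calc t ^ ((k : ℝ) / 2) ≤ 1 := rpow_le_one ht₀ ht (by positivity)
      _ ≤ b := by exact_mod_cast hb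
  have hN : 4 * exp 1 ^ 2 * k < N := (one_lt_div (by positivity)).1 ht
  have hkN : k ≤ N := by exact_mod_cast (show (k : ℝ) ≤ N by nlinarith)
  have hreal : ((N : ℝ) - k + 1) ^ m ≤ b * (4 * k) ^ m := by
    have := (Nat.cast_le (α := ℝ)).2 h
    push_cast [Nat.cast_sub hkN] at this
    exact this
  -- `N ≤ e² (N - k + 1)` because `N > 4 e² k`
  have htN : t ≤ ((N : ℝ) - k + 1) / (4 * k) := by
    rw [div_le_div_iff₀ (by positivity) (by positivity)]
    nlinarith [mul_le_mul_of_nonneg_right he (by positivity : (0 : ℝ) ≤ N)]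
  calc t ^ ((k : ℝ) / 2) ≤ t ^ (m : ℝ) := by
        refine rpow_le_rpow_of_exponent_le ht.le ?_
        have : (k : ℝ) ≤ 2 * m := by exact_mod_cast (show k ≤ 2 * m by omega)
        linarith
    _ = t ^ m := rpow_natCast t m
    _ ≤ (((N : ℝ) - k + 1) / (4 * k)) ^ m := pow_le_pow_left₀ ht₀ htN m
    _ = ((N : ℝ) - k + 1) ^ m / (4 * k) ^ m := div_pow _ _ m
    _ ≤ b := (div_le_iff₀ (by positivity)).2 hreal

theorem stmt_15 (d k : ℕ) (hk : 1 ≤ k) {X : Type*} [Fintype X] [DecidableEq X]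
    (hX : Fintype.card X = 2 ^ d) (x₀ : X)
    (hd : ((k : ℝ)) ^ (1.1 : ℝ) ≤ (2 : ℝ) ^ d) :
    ∃ B : Finset (Finset X),
      (∀ A ∈ B, A.card = k ∧ x₀ ∉ A) ∧
      (∀ A₁ ∈ B, ∀ A₂ ∈ B, A₁ ≠ A₂ → ((A₁ ∩ A₂).card : ℝ) ≤ (k : ℝ) / 2) ∧
      (((2 : ℝ) ^ d - 1) / (4 * Real.exp 1 ^ 2 * k)) ^ ((k : ℝ) / 2) ≤ (B.card : ℝ) := by
  rcases Nat.eq_zero_or_pos d with rfl | hd₀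
  · refine ⟨∅, by simp, by simp, ?_⟩
    simp [zero_rpow (by positivity : (k : ℝ) / 2 ≠ 0)]
  set U := univ.erase x₀
  have hU : #U = 2 ^ d - 1 := by rw [card_erase_of_mem (mem_univ _), card_univ, hX]
  have hkU : k ≤ #U := by have := lt_two_pow_of_rpow_le hk hd₀.ne' hd; omega
  obtain ⟨B, hBU, hB, hBne, hBcard⟩ := exists_packing_powersetCard U hk hkU
  refine ⟨B, fun A hA => ?_, fun A₁ h₁ A₂ h₂ hne => ?_, ?_⟩
  · obtain ⟨hAU, hAk⟩ := mem_powersetCard.1 (hBU hA)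
    exact ⟨hAk, fun hx => (mem_erase.1 (hAU hx)).1 rfl⟩
  · rw [le_div_iff₀ two_pos]
    exact_mod_cast (by have := hB h₁ h₂ hne; omega)
  · have hUcast : (#U : ℝ) = 2 ^ d - 1 := by
      rw [hU, Nat.cast_sub Nat.one_le_two_pow]; push_cast; ring
    rw [← hUcast]
    exact rpow_half_le_of_pow_le hk hBne.card_pos hBcard
end

section
/- Exponential mechanism utility: let q be a sensitivity-1 quality function, S a database of size m, H a finite solution set, and let ê = max_{f∈H} q(S,f). The exponential mechanism, which outputs h ∈ H with probability proportional to exp(ε·q(S,h)/2), outputs a solution h with q(S,h) ≤ ê − Δm with probability at most |H|·exp(−εΔm/2). -/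
open Finset

lemma sum_filter_le_le_card_mul {ι : Type*} (s : Finset ι) (q : ι → ℝ) {g : ℝ → ℝ}
    (hg : Monotone g) {t : ℝ} (hgt : 0 ≤ g t) :
    ∑ i ∈ s.filter fun i => q i ≤ t, g (q i) ≤ s.card * g t :=
  calc ∑ i ∈ s.filter fun i => q i ≤ t, g (q i)
      ≤ (s.filter fun i => q i ≤ t).card • g t :=
        sum_le_card_nsmul _ _ _ fun i hi => hg (mem_filter.mp hi).2
    _ ≤ s.card * g t := by
        rw [nsmul_eq_mul]
        gcongr
        exact filter_subset _ s

lemma exp_mechanism_sublevel_mass_le {ι : Type*} (H : Finset ι) (hH : H.Nonempty)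
    (q : ι → ℝ) {ε : ℝ} (hε : 0 ≤ ε) (t : ℝ) :
    (∑ h ∈ H.filter fun h => q h ≤ t, Real.exp (ε * q h / 2)) /
      (∑ f ∈ H, Real.exp (ε * q f / 2)) ≤
      H.card * Real.exp (ε * (t - H.sup' hH q) / 2) := by
  obtain ⟨f₀, hf₀, hqf₀⟩ := H.exists_mem_eq_sup' hH q
  have hmax : Real.exp (ε * H.sup' hH q / 2) ≤ ∑ f ∈ H, Real.exp (ε * q f / 2) := by
    rw [hqf₀]
    exact single_le_sum (f := fun f => Real.exp (ε * q f / 2))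
      (fun f _ => (Real.exp_pos _).le) hf₀
  have hexp_mono : Monotone fun x => Real.exp (ε * x / 2) := fun x y hxy =>
    Real.exp_le_exp.mpr (by linarith [mul_le_mul_of_nonneg_left hxy hε])
  rw [div_le_iff₀ ((Real.exp_pos _).trans_le hmax)]
  calc ∑ h ∈ H.filter fun h => q h ≤ t, Real.exp (ε * q h / 2)
      ≤ H.card * Real.exp (ε * t / 2) :=
        sum_filter_le_le_card_mul H q hexp_mono (Real.exp_pos _).le
    _ = H.card * Real.exp (ε * (t - H.sup' hH q) / 2) * Real.exp (ε * H.sup' hH q / 2) := by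
        rw [mul_assoc, ← Real.exp_add]
        ring_nf
    _ ≤ H.card * Real.exp (ε * (t - H.sup' hH q) / 2) * ∑ f ∈ H, Real.exp (ε * q f / 2) := by
        gcongr

theorem stmt_17_general {F : Type*} (H : Finset F) (hH : H.Nonempty)
    (q : F → ℝ) (ε Δ m : ℝ) (hε : 0 < ε) :
    (∑ h ∈ H.filter fun h => q h ≤ H.sup' hH q - Δ * m, Real.exp (ε * q h / 2)) /
      (∑ f ∈ H, Real.exp (ε * q f / 2)) ≤
      (H.card : ℝ) * Real.exp (-(ε * Δ * m / 2)) := by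
  convert exp_mechanism_sublevel_mass_le H hH q hε.le (H.sup' hH q - Δ * m) using 3
  ring

theorem stmt_17 {F : Type*} (H : Finset F) (hH : H.Nonempty)
    (q : F → ℝ) (ε Δ m : ℝ) (hε : 0 < ε) (hΔ : 0 < Δ) (hm : 0 < m) :
    (∑ h ∈ H.filter fun h => q h ≤ H.sup' hH q - Δ * m, Real.exp (ε * q h / 2)) /
      (∑ f ∈ H, Real.exp (ε * q f / 2)) ≤
      (H.card : ℝ) * Real.exp (-(ε * Δ * m / 2)) :=
  stmt_17_general H hH q ε Δ m hε
end
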